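/- Let s ∈ ℂ with Re(s) > 1. Let χ₄ : ℕ → ℂ be the Dirichlet character mod 4 given by χ₄(r) = 0 if r is even, χ₄(r) = 1 if r ≡ 1 (mod 4), and χ₄(r) = −1 if r ≡ 3 (mod 4). For q ∈ (0,1) set [r]_q = 1 + q + ⋯ + q^{r-1} and α_r(s,q) = χ₄(r) [r]_q^{-s}. Define β_n(s,q) = Σ_{r=1}^{n} q^r α_r(s,q) / ((q;q)_{n-r} (q;q)_{n+r}) and T_n(s,q) = √n · (2n)! · (1-q)^{2n} β_n(s,q) / 4^n. Then for each n the limit A_n(s) := lim_{q→1⁻} T_n(s,q) exists and lim_{n→∞} A_n(s) = β(s)/√π, where β(s) = Σ_{k=0}^{∞} (-1)^k/(2k+1)^s is the Dirichlet beta function. -/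

import Mathlib

/-!
Since `(q;q)_m = (1-q)^m [m]_q!` with `[m]_q! → m!` as `q → 1`, the factor `(1-q)^{2n}` exactly
cancels the poles of `β_n` at `q = 1`, and
`A_n(s) = Σ_{r=1}^n c_{n,r} χ₄(r) r^{-s}` with `c_{n,r} = √n C(2n, n-r) / 4^n`.
By Stirling `c_{n,0} → 1/√π`, while `c_{n,r} / c_{n,0} → 1` for each fixed `r` and
`c_{n,r} ≤ c_{n,0}` stays bounded; dominated convergence against the absolutely convergent series
`Σ χ₄(r) r^{-s}` then gives `A_n(s) → L(s, χ₄)/√π = β(s)/√π`.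
-/

open Finset Filter Topology

/-- `(q;q)_m = ∏_{j=1}^m (1 - q^j)`. -/
noncomputable def qPoch (q : ℝ) (m : ℕ) : ℝ := ∏ j ∈ Finset.range m, (1 - q ^ (j + 1))

/-- The `q`-integer `[r]_q = 1 + q + ⋯ + q^{r-1}`. -/
noncomputable def qInt (q : ℝ) (r : ℕ) : ℝ := ∑ i ∈ Finset.range r, q ^ i

/-- The Dirichlet character mod 4: `χ₄(r) = 0` for even `r`, `1` if `r ≡ 1 (mod 4)`,
`-1` if `r ≡ 3 (mod 4)`. -/
noncomputable def chiFour (r : ℕ) : ℂ :=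
  if r % 4 = 1 then 1 else if r % 4 = 3 then -1 else 0

/-- `β_n(s,q) = Σ_{r=1}^{n} q^r α_r(s,q) / ((q;q)_{n-r} (q;q)_{n+r})`. -/
noncomputable def betaSeq (α : ℕ → ℝ → ℂ) (n : ℕ) (q : ℝ) : ℂ :=
  ∑ r ∈ Finset.Icc 1 n,
    (q : ℂ) ^ r * α r q / ((qPoch q (n - r) : ℂ) * (qPoch q (n + r) : ℂ))

/-- `T_n(s,q) = √n (2n)! (1-q)^{2n} β_n(s,q) / 4^n`. -/
noncomputable def Tseq (α : ℕ → ℝ → ℂ) (n : ℕ) (q : ℝ) : ℂ :=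
  (Real.sqrt n : ℂ) * ((2 * n).factorial : ℂ) * ((1 : ℂ) - (q : ℂ)) ^ (2 * n)
    * betaSeq α n q / 4 ^ n

open scoped Nat Real

noncomputable def qFactorial (q : ℝ) (m : ℕ) : ℝ := ∏ j ∈ range m, qInt q (j + 1)

lemma qInt_one (r : ℕ) : qInt 1 r = r := by simp [qInt]

lemma continuous_qInt (r : ℕ) : Continuous fun q : ℝ => qInt q r := by
  unfold qInt; fun_prop

lemma one_sub_pow_eq_mul_qInt (q : ℝ) (m : ℕ) : 1 - q ^ m = (1 - q) * qInt q m :=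
  (mul_neg_geom_sum q m).symm

lemma qPoch_eq_pow_mul_qFactorial (q : ℝ) (m : ℕ) :
    qPoch q m = (1 - q) ^ m * qFactorial q m := by
  simp only [qPoch, qFactorial, one_sub_pow_eq_mul_qInt, prod_mul_distrib, prod_const, card_range]

lemma qFactorial_one (m : ℕ) : qFactorial 1 m = m ! := by
  rw [qFactorial, prod_congr rfl fun j _ => qInt_one (j + 1), ← Nat.cast_prod,
    prod_range_add_one_eq_factorial]

lemma tendsto_qFactorial (m : ℕ) : Tendsto (qFactorial · m) (𝓝 1) (𝓝 (m ! : ℝ)) := by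
  have hcont : Continuous (qFactorial · m) :=
    continuous_finsetProd _ fun j _ => continuous_qInt (j + 1)
  simpa [qFactorial_one] using hcont.tendsto 1

lemma tendsto_qInt_cpow {r : ℕ} (hr : r ≠ 0) (s : ℂ) :
    Tendsto (fun q : ℝ => (qInt q r : ℂ) ^ s) (𝓝 1) (𝓝 ((r : ℂ) ^ s)) := by
  have hlim : Tendsto (fun q : ℝ => (qInt q r : ℂ)) (𝓝 1) (𝓝 (r : ℂ)) := by
    simpa [qInt_one] using ((continuous_qInt r).tendsto 1).ofReal
  exact (continuousAt_cpow_const (Complex.natCast_mem_slitPlane.mpr hr)).tendsto.comp hlim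

/-- The `q → 1` limit of `√n (2n)! (1-q)^{2n} / (4^n (q;q)_{n-r} (q;q)_{n+r})`. -/
noncomputable def binomWeight (n r : ℕ) : ℝ := √n * (2 * n).choose (n - r) / 4 ^ n

lemma binomWeight_eq {n r : ℕ} (hr : r ≤ n) :
    binomWeight n r = √n * (2 * n)! / ((n - r)! * (n + r)!) / 4 ^ n := by
  rw [binomWeight, Nat.cast_choose ℝ (by omega : n - r ≤ 2 * n),
    show 2 * n - (n - r) = n + r by omega]
  ring

lemma one_sub_pow_mul_betaSeq (α : ℕ → ℝ → ℂ) (n : ℕ) {q : ℝ} (hq : q ≠ 1) :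
    (1 - (q : ℂ)) ^ (2 * n) * betaSeq α n q =
      ∑ r ∈ Icc 1 n, (q : ℂ) ^ r * α r q / ((qFactorial q (n - r) : ℂ) * qFactorial q (n + r)) := by
  have hq' : (1 - (q : ℂ)) ≠ 0 := sub_ne_zero.mpr (by exact_mod_cast hq.symm)
  rw [betaSeq, mul_sum]
  refine sum_congr rfl fun r hr => ?_
  have h2n : 2 * n = (n - r) + (n + r) := by have := (mem_Icc.mp hr).2; omega
  simp only [qPoch_eq_pow_mul_qFactorial, Complex.ofReal_mul, Complex.ofReal_pow,
    Complex.ofReal_sub, Complex.ofReal_one]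
  rw [h2n, pow_add]
  field_simp

lemma tendsto_Tseq {α : ℕ → ℝ → ℂ} {a : ℕ → ℂ} (n : ℕ)
    (hα : ∀ r ∈ Icc 1 n, Tendsto (α r) (𝓝[≠] 1) (𝓝 (a r))) :
    Tendsto (Tseq α n) (𝓝[≠] 1) (𝓝 (∑ r ∈ Icc 1 n, (binomWeight n r : ℂ) * a r)) := by
  have hfact (m : ℕ) : Tendsto (fun q => (qFactorial q m : ℂ)) (𝓝[≠] 1) (𝓝 (m ! : ℂ)) := by
    simpa using ((tendsto_qFactorial m).mono_left nhdsWithin_le_nhds).ofReal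
  have hsum : Tendsto (fun q : ℝ => ∑ r ∈ Icc 1 n,
      (q : ℂ) ^ r * α r q / ((qFactorial q (n - r) : ℂ) * qFactorial q (n + r))) (𝓝[≠] 1)
      (𝓝 (∑ r ∈ Icc 1 n, 1 ^ r * a r / (((n - r)! : ℂ) * (n + r)!))) := by
    refine tendsto_finsetSum _ fun r hr => ?_
    have hpow : Tendsto (fun q : ℝ => (q : ℂ) ^ r) (𝓝[≠] 1) (𝓝 (1 ^ r)) := by
      simpa using ((continuous_pow r).tendsto (1 : ℝ)).mono_left nhdsWithin_le_nhds |>.ofReal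
    exact (hpow.mul (hα r hr)).div ((hfact _).mul (hfact _)) (by simp [Nat.factorial_ne_zero])
  have hT : Tseq α n =ᶠ[𝓝[≠] 1] fun q => (√n * (2 * n)! : ℂ) * (∑ r ∈ Icc 1 n,
      (q : ℂ) ^ r * α r q / ((qFactorial q (n - r) : ℂ) * qFactorial q (n + r))) / 4 ^ n := by
    filter_upwards [self_mem_nhdsWithin] with q hq
    rw [← one_sub_pow_mul_betaSeq α n hq, Tseq]
    ring
  convert (hsum.const_mul _).div_const (4 ^ n) |>.congr' hT.symm using 2
  rw [mul_sum, sum_div]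
  refine sum_congr rfl fun r hr => ?_
  rw [binomWeight_eq (mem_Icc.mp hr).2]
  push_cast
  ring

lemma sqrt_mul_centralBinom_div_four_pow_eq {n : ℕ} (hn : n ≠ 0) :
    √n * n.centralBinom / 4 ^ n = Stirling.stirlingSeq (2 * n) / Stirling.stirlingSeq n ^ 2 := by
  have hcb : (n.centralBinom : ℝ) = (2 * n)! / (n ! * n !) := by
    rw [Nat.centralBinom, Nat.cast_choose ℝ (by omega), show 2 * n - n = n by omega]
  have h4 : √(2 * (2 * n : ℕ) : ℝ) = 2 * √n := by
    rw [show (2 * (2 * n : ℕ) : ℝ) = 2 ^ 2 * n by push_cast; ring, Real.sqrt_mul (by positivity),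
      Real.sqrt_sq (by norm_num)]
  have h2 : √(2 * n : ℝ) ^ 2 = 2 * n := Real.sq_sqrt (by positivity)
  have hs : √(n : ℝ) ^ 2 = n := Real.sq_sqrt (by positivity)
  rw [Stirling.stirlingSeq, Stirling.stirlingSeq, h4, hcb]
  simp_rw [div_pow, mul_pow, h2]
  push_cast
  field_simp
  rw [pow_mul, pow_mul]
  ring_nf
  rw [hs]

lemma tendsto_sqrt_mul_centralBinom_div_four_pow :
    Tendsto (fun n : ℕ => √n * n.centralBinom / 4 ^ n) atTop (𝓝 (√π)⁻¹) := by
  have hlim := (Stirling.tendsto_stirlingSeq_sqrt_pi.comp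
    (tendsto_id.const_mul_atTop' two_pos)).div
    (Stirling.tendsto_stirlingSeq_sqrt_pi.pow 2) (by positivity)
  rw [sq, div_mul_cancel_left₀ (by positivity)] at hlim
  refine hlim.congr' ?_
  filter_upwards [eventually_ne_atTop 0] with n hn
  exact (sqrt_mul_centralBinom_div_four_pow_eq hn).symm

lemma choose_sub_succ_mul {n r : ℕ} (hr : r < n) :
    (2 * n).choose (n - (r + 1)) * (n + r + 1) = (2 * n).choose (n - r) * (n - r) := by
  have := Nat.choose_succ_right_eq (2 * n) (n - (r + 1))
  rw [show n - (r + 1) + 1 = n - r by omega,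
    show 2 * n - (n - (r + 1)) = n + r + 1 by omega] at this
  exact this.symm

lemma tendsto_choose_sub_div_centralBinom (r : ℕ) :
    Tendsto (fun n : ℕ => ((2 * n).choose (n - r) : ℝ) / n.centralBinom) atTop (𝓝 1) := by
  induction r with
  | zero =>
    refine tendsto_const_nhds.congr fun n => ?_
    rw [Nat.sub_zero, ← Nat.centralBinom, div_self (Nat.cast_ne_zero.mpr n.centralBinom_ne_zero)]
  | succ r ih =>
    have hratio : Tendsto (fun n : ℕ => (-r + 1 * n : ℝ) / (r + 1 + 1 * n)) atTop (𝓝 (1 / 1)) :=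
      tendsto_add_mul_div_add_mul_atTop_nhds _ _ _ one_ne_zero
    have hlim := ih.mul hratio
    rw [div_one, mul_one] at hlim
    refine hlim.congr' ?_
    filter_upwards [eventually_gt_atTop r] with n hn
    have key : ((2 * n).choose (n - (r + 1)) : ℝ) * (n + r + 1) =
        (2 * n).choose (n - r) * (n - r) := by
      rw [← Nat.cast_sub hn.le]
      exact_mod_cast choose_sub_succ_mul hn
    have hcb : (n.centralBinom : ℝ) ≠ 0 := Nat.cast_ne_zero.mpr n.centralBinom_ne_zero
    field_simp
    linear_combination -key

lemma tendsto_binomWeight (r : ℕ) : Tendsto (binomWeight · r) atTop (𝓝 (√π)⁻¹) := by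
  have hlim := tendsto_sqrt_mul_centralBinom_div_four_pow.mul
    (tendsto_choose_sub_div_centralBinom r)
  rw [mul_one] at hlim
  refine hlim.congr fun n => ?_
  have hcb : (n.centralBinom : ℝ) ≠ 0 := Nat.cast_ne_zero.mpr n.centralBinom_ne_zero
  rw [binomWeight]
  field_simp

lemma binomWeight_le (n r : ℕ) : binomWeight n r ≤ √n * n.centralBinom / 4 ^ n := by
  rw [binomWeight]
  gcongr
  exact_mod_cast Nat.choose_le_centralBinom _ _

lemma tendsto_sum_binomWeight_mul {a : ℕ → ℂ} (ha : Summable (‖a ·‖)) (ha0 : a 0 = 0) :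
    Tendsto (fun n => ∑ r ∈ Icc 1 n, (binomWeight n r : ℂ) * a r) atTop
      (𝓝 ((∑' r, a r) / √π)) := by
  obtain ⟨B, hB⟩ := tendsto_sqrt_mul_centralBinom_div_four_pow.bddAbove_range
  have hF (n : ℕ) : ∑ r ∈ Icc 1 n, (binomWeight n r : ℂ) * a r =
      ∑' r, (Icc 1 n : Set ℕ).indicator (fun r => (binomWeight n r : ℂ) * a r) r := by
    simpa using sum_eq_tsum_indicator (fun r => (binomWeight n r : ℂ) * a r) (Icc 1 n)
  simp_rw [hF, div_eq_mul_inv, ← tsum_mul_right]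
  refine tendsto_tsum_of_dominated_convergence (bound := fun r => B * ‖a r‖) (ha.mul_left B)
    (fun r => ?_) (Eventually.of_forall fun n r => ?_)
  · rcases Nat.eq_zero_or_pos r with rfl | hr
    · simp [ha0]
    · have hlim := (tendsto_binomWeight r).ofReal.mul_const (a r)
      convert hlim.congr' ?_ using 2
      · push_cast
        ring
      · filter_upwards [eventually_ge_atTop r] with n hn
        have hmem : r ∈ (Icc 1 n : Set ℕ) := by simp only [coe_Icc, Set.mem_Icc]; omega
        rw [Set.indicator_of_mem hmem]
  · refine (norm_indicator_le_norm_self _ _).trans ?_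
    rw [norm_mul, Complex.norm_real, Real.norm_of_nonneg (by rw [binomWeight]; positivity)]
    exact mul_le_mul_of_nonneg_right ((binomWeight_le n r).trans (hB ⟨n, rfl⟩)) (norm_nonneg _)

lemma norm_chiFour_le_one (r : ℕ) : ‖chiFour r‖ ≤ 1 := by
  unfold chiFour; split_ifs <;> simp

lemma chiFour_two_mul_add_one (k : ℕ) : chiFour (2 * k + 1) = (-1) ^ k := by
  rcases Nat.even_or_odd k with ⟨m, rfl⟩ | ⟨m, rfl⟩
  · rw [chiFour, if_pos (by omega), Even.neg_one_pow ⟨m, rfl⟩]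
  · rw [chiFour, if_neg (by omega), if_pos (by omega), Odd.neg_one_pow ⟨m, rfl⟩]

lemma chiFour_of_even {r : ℕ} (hr : Even r) : chiFour r = 0 := by
  obtain ⟨m, rfl⟩ := hr
  rw [chiFour, if_neg (by omega), if_neg (by omega)]

lemma summable_norm_chiFour_mul_cpow_neg {s : ℂ} (hs : 1 < s.re) :
    Summable fun r : ℕ => ‖chiFour r * (r : ℂ) ^ (-s)‖ := by
  refine (Real.summable_nat_rpow.mpr (by simpa using hs : -s.re < -1)).of_nonneg_of_le
    (fun _ => norm_nonneg _) fun r => ?_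
  rw [norm_mul, Complex.norm_natCast_cpow_of_re_ne_zero r (by simp; linarith), Complex.neg_re]
  exact mul_le_of_le_one_left (by positivity) (norm_chiFour_le_one r)

lemma tsum_chiFour_mul_cpow_neg (s : ℂ) :
    ∑' r : ℕ, chiFour r * (r : ℂ) ^ (-s) = ∑' k : ℕ, (-1 : ℂ) ^ k / ((2 * k + 1 : ℕ) : ℂ) ^ s := by
  have hodd : Function.support (fun r : ℕ => chiFour r * (r : ℂ) ^ (-s)) ⊆
      Set.range (fun k => 2 * k + 1) := by
    intro r hr
    obtain ⟨k, rfl⟩ := (Nat.even_or_odd r).resolve_left fun he => hr (by simp [chiFour_of_even he])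
    exact ⟨k, rfl⟩
  have hinj : Function.Injective fun k : ℕ => 2 * k + 1 := fun a b h => by simpa using h
  rw [← hinj.tsum_eq hodd]
  simp_rw [chiFour_two_mul_add_one, Complex.cpow_neg, div_eq_mul_inv]

/-- Example 3: for `α_r(s,q) = χ₄(r) [r]_q^{-s}`, the two-step limit of `T_n(s,q)` is
`β(s)/√π`, where `β` is the Dirichlet beta function. -/
theorem bailey_zeta_example_dirichletBeta (s : ℂ) (hs : 1 < s.re)
    (α : ℕ → ℝ → ℂ) (hα : ∀ r : ℕ, ∀ q : ℝ, α r q = chiFour r * (qInt q r : ℂ) ^ (-s)) :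
    ∃ A : ℕ → ℂ,
      (∀ n : ℕ, 1 ≤ n →
        Tendsto (fun q : ℝ => Tseq α n q) (𝓝[Set.Ioo (0 : ℝ) 1] 1) (𝓝 (A n))) ∧
      Tendsto A atTop
        (𝓝 ((∑' k : ℕ, (-1 : ℂ) ^ k / ((2 * k + 1 : ℕ) : ℂ) ^ s) /
          (Real.sqrt Real.pi : ℂ))) := by
  set a : ℕ → ℂ := fun r => chiFour r * (r : ℂ) ^ (-s)
  refine ⟨fun n => ∑ r ∈ Icc 1 n, (binomWeight n r : ℂ) * a r, fun n _ => ?_, ?_⟩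
  · have hαlim (r : ℕ) (hr : r ∈ Icc 1 n) : Tendsto (α r) (𝓝[≠] 1) (𝓝 (a r)) := by
      simp_rw [funext (hα r)]
      have hr0 : r ≠ 0 := Nat.one_le_iff_ne_zero.mp (mem_Icc.mp hr).1
      exact ((tendsto_qInt_cpow hr0 (-s)).const_mul _).mono_left nhdsWithin_le_nhds
    exact (tendsto_Tseq n hαlim).mono_left (nhdsWithin_mono _ fun q hq => hq.2.ne)
  · rw [← tsum_chiFour_mul_cpow_neg]
    exact tendsto_sum_binomWeight_mul (summable_norm_chiFour_mul_cpow_neg hs) (by simp [a, chiFour])
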